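/- arXiv:1309.6522 — 5 statements merged into one kernel-verified Lean document; each statement's English description precedes it below -/
import Mathlib

section
/- Define the affine lowering operator f₀ on A ∈ B^{i,m} by decreasing a_{1,n} by 1 (defined when a_{1,n} > 0), and the raising operator e₀ by increasing a_{1,n} by 1 (defined when ε₀(A) = m - Σ_{j=i}^{n} a_{1,j} - Σ_{j=2}^{n} a_{j,n} > 0). Then f₀ and e₀ map B^{i,m} to B^{i,m} (i.e., all lattice-path inequalities are preserved), and they are mutually inverse wherever defined. -/
open Finset

/-- Matrices of the polytope model: entry `a p q` for row `p`, column `q`. -/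
abbrev Mat := ℕ → ℕ → ℕ

/-- A monotone lattice path `β(1) = (1,i), …, β(n) = (i,n)`: each step increases
the row or the column index by 1. -/
def IsPath (n i : ℕ) (β : ℕ → ℕ × ℕ) : Prop :=
  β 1 = (1, i) ∧ β n = (i, n) ∧
    ∀ s, 1 ≤ s → s < n →
      β (s + 1) = ((β s).1 + 1, (β s).2) ∨ β (s + 1) = ((β s).1, (β s).2 + 1)

/-- Membership in the Kirillov–Reshetikhin polytope `B^{i,m}` of type `A_n^{(1)}`:
non-negative integer matrices indexed by `1 ≤ p ≤ i`, `i ≤ q ≤ n` (zero outside),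
all of whose monotone lattice-path sums are at most `m`. -/
def MemKR (n i m : ℕ) (a : Mat) : Prop :=
  (∀ p q, ¬(1 ≤ p ∧ p ≤ i ∧ i ≤ q ∧ q ≤ n) → a p q = 0) ∧
  ∀ β : ℕ → ℕ × ℕ, IsPath n i β → ∑ s ∈ Icc 1 n, a (β s).1 (β s).2 ≤ m

/-- The set of maximizers of `F` on `S`. -/
def maximizers (S : Finset ℕ) (F : ℕ → ℕ) : Finset ℕ :=
  S.filter fun q => ∀ q' ∈ S, F q' ≤ F q

/-- Smallest maximizer. -/
def argmaxLow (S : Finset ℕ) (F : ℕ → ℕ) : ℕ := WithTop.untopD 0 (maximizers S F).min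

/-- Largest maximizer. -/
def argmaxHigh (S : Finset ℕ) (F : ℕ → ℕ) : ℕ := WithBot.unbotD 0 (maximizers S F).max

/-- For `l > i`: `G(q) = Σ_{j=1}^q a_{j,l-1} + Σ_{j=q}^i a_{j,l}`. -/
def Gplus (i : ℕ) (a : Mat) (l q : ℕ) : ℕ :=
  ∑ j ∈ Icc 1 q, a j (l - 1) + ∑ j ∈ Icc q i, a j l

/-- For `l < i`: `F(q) = Σ_{j=i}^q a_{l,j} + Σ_{j=q}^n a_{l+1,j}`. -/
def Fminus (n i : ℕ) (a : Mat) (l q : ℕ) : ℕ :=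
  ∑ j ∈ Icc i q, a l j + ∑ j ∈ Icc q n, a (l + 1) j

def pPlus (i : ℕ) (a : Mat) (l : ℕ) : ℕ := argmaxLow (Icc 1 i) (Gplus i a l)
def qPlus (i : ℕ) (a : Mat) (l : ℕ) : ℕ := argmaxHigh (Icc 1 i) (Gplus i a l)
def pMinus (n i : ℕ) (a : Mat) (l : ℕ) : ℕ := argmaxHigh (Icc i n) (Fminus n i a l)
def qMinus (n i : ℕ) (a : Mat) (l : ℕ) : ℕ := argmaxLow (Icc i n) (Fminus n i a l)

/-- The statistic `φ_l` of the polytope model (`l = 0` is the affine one). -/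
def phi (n i m : ℕ) (a : Mat) (l : ℕ) : ℤ :=
  if l = 0 then (a 1 n : ℤ)
  else if l = i then
    (m : ℤ) - ∑ j ∈ Icc 1 (i - 1), (a j i : ℤ) - ∑ j ∈ Icc i n, (a i j : ℤ)
  else if i < l then
    ∑ j ∈ Icc 1 (pPlus i a l), (a j (l - 1) : ℤ)
      - ∑ j ∈ Icc 1 (pPlus i a l - 1), (a j l : ℤ)
  else
    ∑ j ∈ Icc (pMinus n i a l) n, (a (l + 1) j : ℤ)
      - ∑ j ∈ Icc (pMinus n i a l + 1) n, (a l j : ℤ)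

/-- The statistic `ε_l` of the polytope model (`l = 0` is the affine one). -/
def eps (n i m : ℕ) (a : Mat) (l : ℕ) : ℤ :=
  if l = 0 then
    (m : ℤ) - ∑ j ∈ Icc i n, (a 1 j : ℤ) - ∑ j ∈ Icc 2 n, (a j n : ℤ)
  else if l = i then (a i i : ℤ)
  else if i < l then
    ∑ j ∈ Icc (qPlus i a l) i, (a j l : ℤ)
      - ∑ j ∈ Icc (qPlus i a l + 1) i, (a j (l - 1) : ℤ)
  else
    ∑ j ∈ Icc i (qMinus n i a l), (a l j : ℤ)
      - ∑ j ∈ Icc i (qMinus n i a l - 1), (a (l + 1) j : ℤ)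

/-- Update one entry of a matrix. -/
def upd (a : Mat) (p q v : ℕ) : Mat :=
  fun p' q' => if p' = p ∧ q' = q then v else a p' q'

/-- The Kashiwara raising operator `ẽ_l` on `B^{i,m}` (`l = 0` affine). -/
def eOp (n i m : ℕ) (a : Mat) (l : ℕ) : Option Mat :=
  if eps n i m a l ≤ 0 then none
  else some (
    if l = 0 then upd a 1 n (a 1 n + 1)
    else if l = i then upd a i i (a i i - 1)
    else if i < l then
      upd (upd a (qPlus i a l) (l - 1) (a (qPlus i a l) (l - 1) + 1))
        (qPlus i a l) l (a (qPlus i a l) l - 1)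
    else
      upd (upd a l (qMinus n i a l) (a l (qMinus n i a l) - 1))
        (l + 1) (qMinus n i a l) (a (l + 1) (qMinus n i a l) + 1))

/-- The Kashiwara lowering operator `f̃_l` on `B^{i,m}` (`l = 0` affine). -/
def fOp (n i m : ℕ) (a : Mat) (l : ℕ) : Option Mat :=
  if phi n i m a l ≤ 0 then none
  else some (
    if l = 0 then upd a 1 n (a 1 n - 1)
    else if l = i then upd a i i (a i i + 1)
    else if i < l then
      upd (upd a (pPlus i a l) (l - 1) (a (pPlus i a l) (l - 1) - 1))
        (pPlus i a l) l (a (pPlus i a l) l + 1)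
    else
      upd (upd a l (pMinus n i a l) (a l (pMinus n i a l) + 1))
        (l + 1) (pMinus n i a l) (a (l + 1) (pMinus n i a l) - 1))

/-- `ẽ_l` on the tensor product `B^{r₁,s₁} ⊗ B^{r₂,s₂}`. -/
def eTen (n r₁ s₁ r₂ s₂ l : ℕ) (x : Mat × Mat) : Option (Mat × Mat) :=
  if phi n r₂ s₂ x.2 l < eps n r₁ s₁ x.1 l then
    (eOp n r₁ s₁ x.1 l).map fun a' => (a', x.2)
  else (eOp n r₂ s₂ x.2 l).map fun b' => (x.1, b')

/-- `f̃_l` on the tensor product `B^{r₁,s₁} ⊗ B^{r₂,s₂}`. -/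
def fTen (n r₁ s₁ r₂ s₂ l : ℕ) (x : Mat × Mat) : Option (Mat × Mat) :=
  if phi n r₂ s₂ x.2 l ≤ eps n r₁ s₁ x.1 l then
    (fOp n r₁ s₁ x.1 l).map fun a' => (a', x.2)
  else (fOp n r₂ s₂ x.2 l).map fun b' => (x.1, b')

/-- Classical highest weight element of the tensor product. -/
def IsHW (n r₁ s₁ r₂ s₂ : ℕ) (x : Mat × Mat) : Prop :=
  ∀ l, 1 ≤ l → l ≤ n → eTen n r₁ s₁ r₂ s₂ l x = none

/-- Cartan matrix of type `A_n`: `⟨α_r, α_j^∨⟩`. -/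
def cartan (r j : ℕ) : ℤ :=
  if r = j then 2 else if r + 1 = j ∨ j + 1 = r then -1 else 0

/-- The pairing `⟨wt(A), α_j^∨⟩` where `wt(A) = m ω_i - Σ a_{p,q} α_{p,q}`,
and `α_{p,q} = α_p + ⋯ + α_q`. -/
def wtCoord (n i m : ℕ) (a : Mat) (j : ℕ) : ℤ :=
  (if j = i then (m : ℤ) else 0)
    - ∑ p ∈ Icc 1 i, ∑ q ∈ Icc i n, (a p q : ℤ) * ∑ r ∈ Icc p q, cartan r j

/-- The matrix `b^Λ` with `(p,q)`-entry `c ((p+q) mod (n+1))` on the index range. -/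
def bOf (n i : ℕ) (c : ℕ → ℕ) : Mat :=
  fun p q => if 1 ≤ p ∧ p ≤ i ∧ i ≤ q ∧ q ≤ n then c ((p + q) % (n + 1)) else 0

/-!
`f₀` only lowers an entry, so every lattice-path sum can only drop. `e₀` raises the corner
entry `a_{1,n}`, and a lattice path through the corner `(1,n)` must be the hook running along
row `1` and then down column `n`; the hook sum is at most `m - ε₀(A)`, so raising the corner
by one keeps it at most `m` as soon as `ε₀(A) > 0`.
-/

section Upd

variable {a : Mat} {p q v w : ℕ}

@[simp]
theorem upd_self : upd a p q v p q = v := if_pos ⟨rfl, rfl⟩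

theorem upd_of_ne {p' q' : ℕ} (h : ¬(p' = p ∧ q' = q)) : upd a p q v p' q' = a p' q' :=
  if_neg h

@[simp]
theorem upd_upd : upd (upd a p q v) p q w = upd a p q w := by
  funext p' q'
  by_cases h : p' = p ∧ q' = q
  · simp only [upd, if_pos h]
  · simp only [upd, if_neg h]

@[simp]
theorem upd_apply_self : upd a p q (a p q) = a := by
  funext p' q'
  by_cases h : p' = p ∧ q' = q
  · rw [h.1, h.2, upd_self]
  · exact upd_of_ne h

theorem sum_upd_row {s : Finset ℕ} (hq : q ∈ s) :
    ∑ j ∈ s, upd a p q v p j + a p q = ∑ j ∈ s, a p j + v := by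
  rw [← sum_erase_add _ _ hq, ← sum_erase_add _ _ hq, upd_self]
  have hrest : ∑ j ∈ s.erase q, upd a p q v p j = ∑ j ∈ s.erase q, a p j :=
    sum_congr rfl fun j hj => upd_of_ne fun h => ne_of_mem_erase hj h.2
  omega

end Upd

namespace IsPath

variable {n i : ℕ} {β : ℕ → ℕ × ℕ}

theorem fst_add_snd (hβ : IsPath n i β) {t : ℕ} (ht1 : 1 ≤ t) (htn : t ≤ n) :
    (β t).1 + (β t).2 = t + i := by
  induction t, ht1 using Nat.le_induction with
  | base => simp [hβ.1]
  | succ t ht ih =>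
    have ih := ih (by omega)
    rcases hβ.2.2 t ht (by omega) with h | h <;> rw [h] <;> dsimp only <;> omega

theorem apply_le_apply (hβ : IsPath n i β) {s t : ℕ} (hs : 1 ≤ s) (hst : s ≤ t)
    (htn : t ≤ n) :
    (β s).1 ≤ (β t).1 ∧ (β s).2 ≤ (β t).2 := by
  induction t, hst using Nat.le_induction with
  | base => exact ⟨le_rfl, le_rfl⟩
  | succ t ht ih =>
    have ih := ih (by omega)
    rcases hβ.2.2 t (by omega) (by omega) with h | h <;> rw [h] <;> dsimp only <;> omega

theorem apply_of_le_corner {s : ℕ} (hβ : IsPath n i β) (hsn : s ≤ n) (hs : β s = (1, n))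
    {t : ℕ} (ht1 : 1 ≤ t) (hts : t ≤ s) : β t = (1, t + i - 1) := by
  have hle := hβ.apply_le_apply ht1 hts hsn
  have hge := hβ.apply_le_apply le_rfl ht1 (by omega)
  have hsum := hβ.fst_add_snd ht1 (by omega)
  rw [hs] at hle
  rw [hβ.1] at hge
  exact Prod.ext (by omega) (by omega)

theorem apply_of_corner_le {s : ℕ} (hβ : IsPath n i β) (hs1 : 1 ≤ s) (hs : β s = (1, n))
    {t : ℕ} (hst : s ≤ t) (htn : t ≤ n) : β t = (t + i - n, n) := by
  have hge := hβ.apply_le_apply hs1 hst htn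
  have hle := hβ.apply_le_apply (by omega) htn le_rfl
  have hsum := hβ.fst_add_snd (by omega) htn
  rw [hs] at hge
  rw [hβ.2.1] at hle
  exact Prod.ext (by omega) (by omega)

theorem corner_index {s : ℕ} (hβ : IsPath n i β) (hs1 : 1 ≤ s) (hsn : s ≤ n)
    (hs : β s = (1, n)) : s + 1 + i = n + 2 := by
  have := hβ.fst_add_snd hs1 hsn
  rw [hs] at this
  dsimp only at this
  omega

theorem sum_eq_hook {s : ℕ} (hβ : IsPath n i β) (hs1 : 1 ≤ s) (hsn : s ≤ n)
    (hs : β s = (1, n)) (b : Mat) :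
    ∑ t ∈ Icc 1 n, b (β t).1 (β t).2 =
      ∑ j ∈ Icc i n, b 1 j + ∑ p ∈ Icc 2 i, b p n := by
  have hidx := hβ.corner_index hs1 hsn hs
  have hsplit : Icc 1 n = Icc 1 s ∪ Icc (s + 1) n := by
    ext t; simp only [mem_union, mem_Icc]; omega
  rw [hsplit, sum_union (disjoint_left.2 fun t ht ht' => by
    simp only [mem_Icc] at ht ht'; omega)]
  congr 1
  · refine sum_nbij' (fun t => t + i - 1) (fun j => j + 1 - i) ?_ ?_ ?_ ?_ ?_ <;>
      intro t ht <;> simp only [mem_Icc] at ht ⊢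
    · omega
    · omega
    · omega
    · omega
    · rw [hβ.apply_of_le_corner hsn hs ht.1 ht.2]
  · refine sum_nbij' (fun t => t + i - n) (fun p => p + n - i) ?_ ?_ ?_ ?_ ?_ <;>
      intro t ht <;> simp only [mem_Icc] at ht ⊢
    · omega
    · omega
    · omega
    · omega
    · rw [hβ.apply_of_corner_le hs1 hs (by omega) ht.2]

end IsPath

theorem hook_add_eps_zero_le {n i m : ℕ} {a : Mat} (hin : i ≤ n) :
    ∑ j ∈ Icc i n, (a 1 j : ℤ) + ∑ p ∈ Icc 2 i, (a p n : ℤ) + eps n i m a 0 ≤ m := by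
  have hcol : ∑ p ∈ Icc 2 i, (a p n : ℤ) ≤ ∑ p ∈ Icc 2 n, (a p n : ℤ) :=
    sum_le_sum_of_subset_of_nonneg (Icc_subset_Icc_right hin) fun _ _ _ => by positivity
  simp only [eps, if_true]
  linarith

namespace MemKR

variable {n i m : ℕ} {a : Mat}

theorem upd_of_le {p q v : ℕ} (ha : MemKR n i m a) (hv : v ≤ a p q) :
    MemKR n i m (upd a p q v) := by
  have hle : ∀ p' q', upd a p q v p' q' ≤ a p' q' := fun p' q' => by
    by_cases h : p' = p ∧ q' = q
    · rw [h.1, h.2, upd_self]; exact hv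
    · rw [upd_of_ne h]
  refine ⟨fun p' q' hout => Nat.eq_zero_of_le_zero ?_, fun β hβ => ?_⟩
  · exact ha.1 p' q' hout ▸ hle p' q'
  · exact (sum_le_sum fun t _ => hle _ _).trans (ha.2 β hβ)

theorem upd_one_n_succ (hi1 : 1 ≤ i) (hin : i ≤ n) (ha : MemKR n i m a)
    (heps : 0 < eps n i m a 0) : MemKR n i m (upd a 1 n (a 1 n + 1)) := by
  refine ⟨fun p q hout => ?_, fun β hβ => ?_⟩
  · have hcorner : ¬(p = 1 ∧ q = n) := fun h =>
      hout ⟨by omega, by omega, by omega, by omega⟩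
    rw [upd_of_ne hcorner, ha.1 p q hout]
  by_cases hpass : ∃ s, 1 ≤ s ∧ s ≤ n ∧ β s = (1, n)
  · obtain ⟨s, hs1, hsn, hs⟩ := hpass
    have hrow := sum_upd_row (a := a) (p := 1) (v := a 1 n + 1) (mem_Icc.2 ⟨hin, le_rfl⟩)
    have hcol : ∑ p ∈ Icc 2 i, upd a 1 n (a 1 n + 1) p n = ∑ p ∈ Icc 2 i, a p n :=
      sum_congr rfl fun p hp => upd_of_ne fun h => by simp only [mem_Icc] at hp; omega
    have hhook := hook_add_eps_zero_le (m := m) (a := a) hin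
    rw [hβ.sum_eq_hook hs1 hsn hs, hcol]
    zify at hrow ⊢
    linarith
  · push Not at hpass
    calc ∑ t ∈ Icc 1 n, upd a 1 n (a 1 n + 1) (β t).1 (β t).2
        = ∑ t ∈ Icc 1 n, a (β t).1 (β t).2 := sum_congr rfl fun t ht => by
          rw [mem_Icc] at ht
          exact upd_of_ne fun h => hpass t ht.1 ht.2 (Prod.ext h.1 h.2)
      _ ≤ m := ha.2 β hβ

end MemKR

/-- `f₀` (decrease `a_{1,n}`, defined when `a_{1,n} > 0`) and `e₀`
(increase `a_{1,n}`, defined when `ε₀(A) > 0`) map `B^{i,m}` to itself and are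
mutually inverse wherever defined. -/
theorem stmt2 (n i m : ℕ) (hi1 : 1 ≤ i) (hin : i ≤ n) (a : Mat)
    (ha : MemKR n i m a) :
    (0 < a 1 n → MemKR n i m (upd a 1 n (a 1 n - 1))) ∧
    (0 < eps n i m a 0 → MemKR n i m (upd a 1 n (a 1 n + 1))) ∧
    (0 < a 1 n →
      upd (upd a 1 n (a 1 n - 1)) 1 n (upd a 1 n (a 1 n - 1) 1 n + 1) = a) ∧
    (0 < eps n i m a 0 →
      upd (upd a 1 n (a 1 n + 1)) 1 n (upd a 1 n (a 1 n + 1) 1 n - 1) = a) := by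
  refine ⟨fun _ => ha.upd_of_le (Nat.sub_le _ _), ha.upd_one_n_succ hi1 hin,
    fun hpos => ?_, fun _ => ?_⟩
  · rw [upd_upd, upd_self, Nat.sub_add_cancel hpos, upd_apply_self]
  · rw [upd_upd, upd_self, Nat.add_sub_cancel, upd_apply_self]
end

section
/- For type A₁^{(1)} and s₁ ≤ s₂, the map σ : B^{1,s₁} ⊗ B^{1,s₂} → B^{1,s₂} ⊗ B^{1,s₁} defined by σ(A, B) = (A, B) if A + B ≤ s₁; σ(A, B) = (2A - s₁ + B, s₁ - A) if s₁ < A + B ≤ s₂; σ(A, B) = (A + s₂ - s₁, s₁ - s₂ + B) if s₂ < A + B, is a well-defined bijection that preserves weight: wt(A ⊗ B) = wt(σ(A ⊗ B)), where wt(a ⊗ b) is (s₁ + s₂) ω₁ - (a + b) α₁. -/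
/-- `ẽ₁` on `B^{1,s'} ⊗ B^{1,t}` for type `A₁^{(1)}`: here `t` is the capacity of the
second factor, `ε₁(b₁) = b₁`, `φ₁(b₂) = t - b₂`. -/
def e1A1 (t : ℤ) (p : ℤ × ℤ) : Option (ℤ × ℤ) :=
  if t - p.2 < p.1 then (if p.1 = 0 then none else some (p.1 - 1, p.2))
  else (if p.2 = 0 then none else some (p.1, p.2 - 1))

/-- `ẽ₀` on `B^{1,s₁} ⊗ B^{1,s₂}` for type `A₁^{(1)}`:
`ε₀(b) = s - b`, `φ₀(b) = b`, and `ẽ₀` adds 1 to the single entry. -/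
def e0A1 (s₁ s₂ : ℤ) (p : ℤ × ℤ) : Option (ℤ × ℤ) :=
  if p.2 < s₁ - p.1 then (if p.1 = s₁ then none else some (p.1 + 1, p.2))
  else (if p.2 = s₂ then none else some (p.1, p.2 + 1))

/-- The combinatorial R-matrix `σ : B^{1,s₁} ⊗ B^{1,s₂} → B^{1,s₂} ⊗ B^{1,s₁}`. -/
def sigmaA1 (s₁ s₂ : ℤ) (p : ℤ × ℤ) : ℤ × ℤ :=
  if p.1 + p.2 ≤ s₁ then p
  else if p.1 + p.2 ≤ s₂ then (2 * p.1 - s₁ + p.2, s₁ - p.1)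
  else (p.1 + s₂ - s₁, s₁ - s₂ + p.2)

def tauA1 (s₁ s₂ : ℤ) (p : ℤ × ℤ) : ℤ × ℤ :=
  if p.1 + p.2 ≤ s₁ then p
  else if p.1 + p.2 ≤ s₂ then (s₁ - p.2, p.1 + 2 * p.2 - s₁)
  else (p.1 - s₂ + s₁, s₂ - s₁ + p.2)

/-- the piecewise map `σ` is a well-defined weight-preserving
bijection `B^{1,s₁} ⊗ B^{1,s₂} → B^{1,s₂} ⊗ B^{1,s₁}`; preserving
`A + B` is equivalent to preserving `wt = (s₁+s₂)ω₁ - (A+B)α₁`. -/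
theorem stmt6 (s₁ s₂ : ℤ) (hs₁ : 0 ≤ s₁) (h12 : s₁ ≤ s₂) :
    (∀ A B : ℤ, 0 ≤ A → A ≤ s₁ → 0 ≤ B → B ≤ s₂ →
      0 ≤ (sigmaA1 s₁ s₂ (A, B)).1 ∧ (sigmaA1 s₁ s₂ (A, B)).1 ≤ s₂ ∧
      0 ≤ (sigmaA1 s₁ s₂ (A, B)).2 ∧ (sigmaA1 s₁ s₂ (A, B)).2 ≤ s₁ ∧
      (sigmaA1 s₁ s₂ (A, B)).1 + (sigmaA1 s₁ s₂ (A, B)).2 = A + B) ∧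
    Set.BijOn (sigmaA1 s₁ s₂) (Set.Icc 0 s₁ ×ˢ Set.Icc 0 s₂)
      (Set.Icc 0 s₂ ×ˢ Set.Icc 0 s₁) := by
  constructor
  · intro A B h1 h2 h3 h4
    simp only [sigmaA1]
    split_ifs <;> simp <;> omega
  · apply Set.InvOn.bijOn (f' := tauA1 s₁ s₂)
    · constructor
      · rintro ⟨A, B⟩ ⟨⟨h1, h2⟩, h3, h4⟩
        simp only [Set.mem_Icc] at h1 h2 h3 h4
        simp only [sigmaA1, tauA1]
        split_ifs <;> simp_all <;> omega
      · rintro ⟨A, B⟩ ⟨⟨h1, h2⟩, h3, h4⟩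
        simp only [Set.mem_Icc] at h1 h2 h3 h4
        simp only [sigmaA1, tauA1]
        split_ifs <;> simp_all <;> omega
    · rintro ⟨A, B⟩ ⟨⟨h1, h2⟩, h3, h4⟩
      simp only [sigmaA1]
      split_ifs <;> simp_all [Set.mem_prod, Set.mem_Icc, Prod.le_def] <;> omega
    · rintro ⟨A, B⟩ ⟨⟨h1, h2⟩, h3, h4⟩
      simp only [tauA1]
      split_ifs <;> simp_all [Set.mem_prod, Set.mem_Icc, Prod.le_def] <;> omega
end

section
/- For type A₁^{(1)} and s₁ ≤ s₂, the map σ from the previous statement commutes with the Kashiwara operator ẽ₁ on the tensor products: for all (A, B) ∈ B^{1,s₁} ⊗ B^{1,s₂}, σ(ẽ₁(A ⊗ B)) = ẽ₁(σ(A ⊗ B)), with the convention σ(0) = 0. -/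
section

variable {t a b : ℤ}

theorem e1A1_of_lt (h : t - b < a) (ha : a ≠ 0) : e1A1 t (a, b) = some (a - 1, b) := by
  simp [e1A1, h, ha]

theorem e1A1_of_le (h : a ≤ t - b) (hb : b ≠ 0) : e1A1 t (a, b) = some (a, b - 1) := by
  simp [e1A1, not_lt.2 h, hb]

theorem e1A1_mk_zero (h : a ≤ t) : e1A1 t (a, 0) = none := by
  simp [e1A1, not_lt.2 h]

end

section

variable {s₁ s₂ A B : ℤ}

theorem sigmaA1_of_add_le (h : A + B ≤ s₁) : sigmaA1 s₁ s₂ (A, B) = (A, B) := by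
  simp [sigmaA1, h]

theorem sigmaA1_of_le_add_of_add_le (h₁ : s₁ ≤ A + B) (h₂ : A + B ≤ s₂) :
    sigmaA1 s₁ s₂ (A, B) = (2 * A - s₁ + B, s₁ - A) := by
  unfold sigmaA1
  split_ifs <;> ext <;> simp only <;> omega

theorem sigmaA1_of_le_add (h12 : s₁ ≤ s₂) (h : s₂ ≤ A + B) :
    sigmaA1 s₁ s₂ (A, B) = (A + s₂ - s₁, s₁ - s₂ + B) := by
  unfold sigmaA1
  split_ifs <;> ext <;> simp only <;> omega

theorem map_sigmaA1_e1A1_of_add_le (h12 : s₁ ≤ s₂) (h : A + B ≤ s₁) :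
    Option.map (sigmaA1 s₁ s₂) (e1A1 s₂ (A, B)) = e1A1 s₁ (sigmaA1 s₁ s₂ (A, B)) := by
  rw [sigmaA1_of_add_le h]
  rcases eq_or_ne B 0 with rfl | hB
  · rw [e1A1_mk_zero (by omega), e1A1_mk_zero (by omega), Option.map_none]
  · rw [e1A1_of_le (by omega) hB, e1A1_of_le (by omega) hB, Option.map_some,
      sigmaA1_of_add_le (by omega)]

theorem map_sigmaA1_e1A1_of_lt_add_of_add_le (hA0 : 0 ≤ A) (hA1 : A ≤ s₁)
    (h₁ : s₁ < A + B) (h₂ : A + B ≤ s₂) :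
    Option.map (sigmaA1 s₁ s₂) (e1A1 s₂ (A, B)) = e1A1 s₁ (sigmaA1 s₁ s₂ (A, B)) := by
  rw [e1A1_of_le (by omega) (by omega), Option.map_some,
    sigmaA1_of_le_add_of_add_le (by omega) (by omega),
    sigmaA1_of_le_add_of_add_le h₁.le h₂, e1A1_of_lt (by omega) (by omega)]
  congr 2
  ring

theorem map_sigmaA1_e1A1_of_lt_add (h12 : s₁ ≤ s₂) (hB1 : B ≤ s₂) (h : s₂ < A + B) :
    Option.map (sigmaA1 s₁ s₂) (e1A1 s₂ (A, B)) = e1A1 s₁ (sigmaA1 s₁ s₂ (A, B)) := by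
  rw [e1A1_of_lt (by omega) (by omega), Option.map_some, sigmaA1_of_le_add h12 (by omega),
    sigmaA1_of_le_add h12 h.le, e1A1_of_lt (by omega) (by omega)]
  congr 2
  ring

end

theorem stmt7_general (s₁ s₂ : ℤ) (h12 : s₁ ≤ s₂) (A B : ℤ)
    (hA0 : 0 ≤ A) (hA1 : A ≤ s₁) (hB1 : B ≤ s₂) :
    Option.map (sigmaA1 s₁ s₂) (e1A1 s₂ (A, B)) =
      e1A1 s₁ (sigmaA1 s₁ s₂ (A, B)) := by
  rcases le_or_gt (A + B) s₁ with h₁ | h₁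
  · exact map_sigmaA1_e1A1_of_add_le h12 h₁
  rcases le_or_gt (A + B) s₂ with h₂ | h₂
  · exact map_sigmaA1_e1A1_of_lt_add_of_add_le hA0 hA1 h₁ h₂
  · exact map_sigmaA1_e1A1_of_lt_add h12 hB1 h₂

/-- `σ` commutes with `ẽ₁` (with the convention `σ(0) = 0`). -/
theorem stmt7 (s₁ s₂ : ℤ) (hs₁ : 0 ≤ s₁) (h12 : s₁ ≤ s₂) (A B : ℤ)
    (hA0 : 0 ≤ A) (hA1 : A ≤ s₁) (hB0 : 0 ≤ B) (hB1 : B ≤ s₂) :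
    Option.map (sigmaA1 s₁ s₂) (e1A1 s₂ (A, B)) =
      e1A1 s₁ (sigmaA1 s₁ s₂ (A, B)) :=
  stmt7_general s₁ s₂ h12 A B hA0 hA1 hB1
end

section
/- Let r₁ ≤ r₂, s = min(s₁,s₂), k = min(r₁ - 1, n - r₂). If A ⊗ B ∈ B^{r₁,s₁} ⊗ B^{r₂,s₂} is a classical highest weight element (ẽ_l(A ⊗ B) = 0 for all l = 1,…,n), then B = 0, a_{p,q} = 0 for all (p,q) not in {(r₁, r₂), (r₁-1, r₂+1), …, (r₁-k, r₂+k)}, and 0 ≤ a_{r₁-k, r₂+k} ≤ ⋯ ≤ a_{r₁-1, r₂+1} ≤ a_{r₁, r₂} ≤ s. Conversely, every such pair (A, 0) is a classical highest weight element. In particular the set of classical highest weight elements is in bijection with weakly decreasing sequences (a₀ ≥ a₁ ≥ ⋯ ≥ a_k) of non-negative integers with a₀ ≤ s. -/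
open Finset

/-!
On `B^{i,m}`, for a colour `l > i` the statistic `ε_l` is the excess of `max G` over `G(i)`
plus the corner entry `a_{i,l}`, where `G = Gplus i a l` is the function whose maximizers
locate the Kashiwara operators (symmetrically with `F = Fminus` for `l < i`), and every `φ_l`
is non-negative. By the tensor product rule, `A ⊗ B` is then highest weight iff
`ε_l(B) ≤ 0` and `ε_l(A) ≤ φ_l(B)` for all `l`.

The conditions `ε_l ≤ 0` for all colours `l ≠ c` kill, row by row from the bottom, every
entry off the antidiagonal through `(i, c)`, and between consecutive antidiagonal entries
they give the monotonicity. With no colour exempt this forces `B = 0`, so that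
`φ_l(B) = s₂ δ_{l,r₂}` and only `ε_{r₂}(A) ≥ a_{r₁,r₂}` may be positive. Conversely, for `A`
supported on the antidiagonal with entries increasing towards the corner, `G` and `F` are
monotone, so `ε_l(A)` is the corner entry, which vanishes unless `l = r₂`.
-/

theorem sum_Icc_consecutive {M : Type*} [AddCommMonoid M] (f : ℕ → M) {a b c : ℕ}
    (hab : a ≤ b + 1) (hbc : b ≤ c) :
    ∑ j ∈ Icc a b, f j + ∑ j ∈ Icc (b + 1) c, f j = ∑ j ∈ Icc a c, f j := by
  simp only [← Ico_add_one_right_eq_Icc]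
  exact sum_Ico_consecutive f hab (by omega)

theorem sum_Icc_add_one_add_one {M : Type*} [AddCommMonoid M] (f : ℕ → M) (a b : ℕ) :
    ∑ j ∈ Icc (a + 1) (b + 1), f j = ∑ j ∈ Icc a b, f (j + 1) := by
  rw [← map_add_right_Icc a b 1, sum_map]
  rfl

section Argmax

variable {S : Finset ℕ} {F : ℕ → ℕ}

theorem mem_maximizers {q : ℕ} : q ∈ maximizers S F ↔ q ∈ S ∧ ∀ q' ∈ S, F q' ≤ F q :=
  mem_filter

theorem maximizers_nonempty (hS : S.Nonempty) : (maximizers S F).Nonempty :=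
  let ⟨q, hq, hmax⟩ := S.exists_max_image F hS
  ⟨q, mem_maximizers.2 ⟨hq, hmax⟩⟩

theorem argmaxLow_mem_maximizers (hS : S.Nonempty) : argmaxLow S F ∈ maximizers S F := by
  rw [argmaxLow, ← coe_min' (maximizers_nonempty hS), WithTop.untopD_coe]
  exact min'_mem _ _

theorem argmaxHigh_mem_maximizers (hS : S.Nonempty) : argmaxHigh S F ∈ maximizers S F := by
  rw [argmaxHigh, ← coe_max' (maximizers_nonempty hS), WithBot.unbotD_coe]
  exact max'_mem _ _

end Argmax

section Polytope

variable {n i m l : ℕ} {a : Mat}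

theorem qPlus_mem_maximizers (hi : 1 ≤ i) :
    qPlus i a l ∈ maximizers (Icc 1 i) (Gplus i a l) :=
  argmaxHigh_mem_maximizers (nonempty_Icc.2 hi)

theorem pPlus_mem_maximizers (hi : 1 ≤ i) :
    pPlus i a l ∈ maximizers (Icc 1 i) (Gplus i a l) :=
  argmaxLow_mem_maximizers (nonempty_Icc.2 hi)

theorem qMinus_mem_maximizers (hin : i ≤ n) :
    qMinus n i a l ∈ maximizers (Icc i n) (Fminus n i a l) :=
  argmaxLow_mem_maximizers (nonempty_Icc.2 hin)

theorem pMinus_mem_maximizers (hin : i ≤ n) :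
    pMinus n i a l ∈ maximizers (Icc i n) (Fminus n i a l) :=
  argmaxHigh_mem_maximizers (nonempty_Icc.2 hin)

theorem eps_self (hi : 1 ≤ i) : eps n i m a i = a i i := by
  rw [eps, if_neg (by omega), if_pos rfl]

theorem Gplus_add_sum {q : ℕ} (hq : q ∈ Icc 1 i) :
    Gplus i a l q + ∑ j ∈ Icc (q + 1) i, a j (l - 1) + a i l
      = Gplus i a l i + ∑ j ∈ Icc q i, a j l := by
  have hsplit := sum_Icc_consecutive (fun j => a j (l - 1)) (a := 1) (b := q) (by omega)
    (mem_Icc.1 hq).2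
  simp only [Gplus, Icc_self, sum_singleton] at hsplit ⊢
  omega

theorem Fminus_add_sum (hi : 1 ≤ i) {q : ℕ} (hq : q ∈ Icc i n) :
    Fminus n i a l q + ∑ j ∈ Icc i (q - 1), a (l + 1) j + a l i
      = Fminus n i a l i + ∑ j ∈ Icc i q, a l j := by
  rw [mem_Icc] at hq
  have hsplit := sum_Icc_consecutive (fun j => a (l + 1) j) (a := i) (b := q - 1)
    (c := n) (by omega) (by omega)
  rw [Nat.sub_add_cancel (by omega)] at hsplit
  simp only [Fminus, Icc_self, sum_singleton] at hsplit ⊢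
  omega

theorem eps_of_lt (hi : 1 ≤ i) (hil : i < l) :
    eps n i m a l = (Gplus i a l (qPlus i a l) : ℤ) - Gplus i a l i + a i l := by
  have hkey := Gplus_add_sum (a := a) (l := l)
    (mem_maximizers.1 (qPlus_mem_maximizers (a := a) (l := l) hi)).1
  rw [eps, if_neg (by omega), if_neg (by omega), if_pos hil]
  zify at hkey
  linarith

theorem eps_of_gt (hl : 1 ≤ l) (hli : l < i) (hin : i ≤ n) :
    eps n i m a l = (Fminus n i a l (qMinus n i a l) : ℤ) - Fminus n i a l i + a l i := by
  have hkey := Fminus_add_sum (a := a) (l := l) (by omega)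
    (mem_maximizers.1 (qMinus_mem_maximizers (a := a) (l := l) hin)).1
  rw [eps, if_neg (by omega), if_neg (by omega), if_neg (by omega)]
  zify at hkey
  linarith

theorem le_eps_of_le (hi : 1 ≤ i) (hil : i ≤ l) : (a i l : ℤ) ≤ eps n i m a l := by
  rcases hil.eq_or_lt with rfl | hil
  · exact (eps_self hi).ge
  · have hmax := (mem_maximizers.1 (qPlus_mem_maximizers (a := a) (l := l) hi)).2 i
      (mem_Icc.2 ⟨hi, le_rfl⟩)
    rw [eps_of_lt hi hil]
    omega

theorem le_sum_of_eps_nonpos_of_lt (hi : 1 ≤ i) (hil : i < l) (h : eps n i m a l ≤ 0)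
    {p : ℕ} (hp : p ∈ Icc 1 i) : a p l ≤ ∑ j ∈ Icc (p + 1) i, a j (l - 1) := by
  have hmax := (mem_maximizers.1 (qPlus_mem_maximizers (a := a) (l := l) hi)).2 p hp
  have hkey := Gplus_add_sum (a := a) (l := l) hp
  have hentry : a p l ≤ ∑ j ∈ Icc p i, a j l :=
    single_le_sum (f := fun j => a j l) (fun _ _ => Nat.zero_le _)
      (mem_Icc.2 ⟨le_rfl, (mem_Icc.1 hp).2⟩)
  rw [eps_of_lt hi hil] at h
  omega

theorem le_sum_of_eps_nonpos_of_gt (hl : 1 ≤ l) (hli : l < i) (hin : i ≤ n)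
    (h : eps n i m a l ≤ 0) {q : ℕ} (hq : q ∈ Icc i n) :
    a l q ≤ ∑ j ∈ Icc i (q - 1), a (l + 1) j := by
  have hmax := (mem_maximizers.1 (qMinus_mem_maximizers (a := a) (l := l) hin)).2 q hq
  have hkey := Fminus_add_sum (a := a) (l := l) (by omega) hq
  have hentry : a l q ≤ ∑ j ∈ Icc i q, a l j :=
    single_le_sum (f := fun j => a l j) (fun _ _ => Nat.zero_le _)
      (mem_Icc.2 ⟨(mem_Icc.1 hq).1, le_rfl⟩)
  rw [eps_of_gt hl hli hin] at h
  omega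

theorem eps_eq_of_lt (hi : 1 ≤ i) (hil : i < l)
    (hmono : ∀ j, 1 ≤ j → j < i → a j l ≤ a (j + 1) (l - 1)) : eps n i m a l = a i l := by
  obtain ⟨hq, hmax⟩ := mem_maximizers.1 (qPlus_mem_maximizers (a := a) (l := l) hi)
  have hkey := Gplus_add_sum (a := a) (l := l) hq
  have hmaxi := hmax i (mem_Icc.2 ⟨hi, le_rfl⟩)
  rw [eps_of_lt hi hil]
  generalize qPlus i a l = q at hq hkey hmaxi ⊢
  rw [mem_Icc] at hq
  obtain ⟨k, rfl⟩ : ∃ k, i = k + 1 := ⟨i - 1, by omega⟩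
  have hshift : ∑ j ∈ Icc q k, a j l ≤ ∑ j ∈ Icc (q + 1) (k + 1), a j (l - 1) := by
    rw [sum_Icc_add_one_add_one]
    exact sum_le_sum fun j hj => hmono j (by simp at hj; omega) (by simp at hj; omega)
  have htop : ∑ j ∈ Icc q (k + 1), a j l = ∑ j ∈ Icc q k, a j l + a (k + 1) l :=
    sum_Icc_succ_top (by omega) _
  omega

theorem eps_eq_of_gt (hl : 1 ≤ l) (hli : l < i) (hin : i ≤ n)
    (hmono : ∀ j, i ≤ j → j < n → a l (j + 1) ≤ a (l + 1) j) : eps n i m a l = a l i := by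
  obtain ⟨hq, hmax⟩ := mem_maximizers.1 (qMinus_mem_maximizers (a := a) (l := l) hin)
  have hkey := Fminus_add_sum (a := a) (l := l) (by omega) hq
  have hmaxi := hmax i (mem_Icc.2 ⟨le_rfl, hin⟩)
  rw [eps_of_gt hl hli hin]
  generalize qMinus n i a l = q at hq hkey hmaxi ⊢
  rw [mem_Icc] at hq
  obtain ⟨k, rfl⟩ : ∃ k, q = k + 1 := ⟨q - 1, by omega⟩
  have hshift : ∑ j ∈ Icc (i + 1) (k + 1), a l j ≤ ∑ j ∈ Icc i k, a (l + 1) j := by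
    rw [sum_Icc_add_one_add_one]
    exact sum_le_sum fun j hj => hmono j (by simp at hj; omega) (by simp at hj; omega)
  have hsplit := sum_Icc_consecutive (fun j => a l j) (Nat.le_succ i) hq.1
  simp only [Icc_self, sum_singleton, Nat.add_sub_cancel] at hsplit hkey
  omega

theorem phi_nonneg_of_lt (hi : 1 ≤ i) (hil : i < l) : 0 ≤ phi n i m a l := by
  obtain ⟨hp, hmax⟩ := mem_maximizers.1 (pPlus_mem_maximizers (a := a) (l := l) hi)
  have hmax1 := hmax 1 (mem_Icc.2 ⟨le_rfl, hi⟩)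
  rw [phi, if_neg (by omega), if_neg (by omega), if_pos hil, sub_nonneg]
  generalize pPlus i a l = p at hp hmax1 ⊢
  rw [mem_Icc] at hp
  have hsplit := sum_Icc_consecutive (fun j => a j l) (a := 1) (b := p - 1) (c := i)
    (by omega) (by omega)
  rw [Nat.sub_add_cancel hp.1] at hsplit
  simp only [Gplus, Icc_self, sum_singleton] at hmax1 hsplit
  exact_mod_cast (by omega : ∑ j ∈ Icc 1 (p - 1), a j l ≤ ∑ j ∈ Icc 1 p, a j (l - 1))

theorem phi_nonneg_of_gt (hl : 1 ≤ l) (hli : l < i) (hin : i ≤ n) : 0 ≤ phi n i m a l := by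
  obtain ⟨hp, hmax⟩ := mem_maximizers.1 (pMinus_mem_maximizers (a := a) (l := l) hin)
  have hmaxn := hmax n (mem_Icc.2 ⟨hin, le_rfl⟩)
  rw [phi, if_neg (by omega), if_neg (by omega), if_neg (by omega), sub_nonneg]
  generalize pMinus n i a l = p at hp hmaxn ⊢
  rw [mem_Icc] at hp
  have hsplit := sum_Icc_consecutive (fun j => a l j) (by omega : i ≤ p + 1) hp.2
  simp only [Fminus, Icc_self, sum_singleton] at hmaxn hsplit
  exact_mod_cast (by omega : ∑ j ∈ Icc (p + 1) n, a l j ≤ ∑ j ∈ Icc p n, a (l + 1) j)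

def hookPath (i : ℕ) (s : ℕ) : ℕ × ℕ := if s < i then (s, i) else (i, s)

theorem hookPath_isPath (hi : 1 ≤ i) (hin : i ≤ n) : IsPath n i (hookPath i) := by
  refine ⟨?_, ?_, fun s _ _ => ?_⟩ <;> simp only [hookPath]
  · split_ifs
    · rfl
    · rw [show i = 1 by omega]
  · rw [if_neg (by omega)]
  · split_ifs <;> simp <;> omega

theorem sum_hookPath (hi : 1 ≤ i) (hin : i ≤ n) :
    ∑ s ∈ Icc 1 n, a (hookPath i s).1 (hookPath i s).2
      = ∑ j ∈ Icc 1 (i - 1), a j i + ∑ j ∈ Icc i n, a i j := by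
  rw [← sum_Icc_consecutive _ (b := i - 1) (by omega) (by omega), Nat.sub_add_cancel hi]
  congr 1 <;> refine sum_congr rfl fun s hs => ?_ <;> rw [mem_Icc] at hs <;> simp only [hookPath]
  · rw [if_pos (by omega)]
  · rw [if_neg (by omega)]

theorem hook_sum_le (hi : 1 ≤ i) (hin : i ≤ n) (hK : MemKR n i m a) :
    ∑ j ∈ Icc 1 (i - 1), a j i + ∑ j ∈ Icc i n, a i j ≤ m :=
  sum_hookPath (a := a) hi hin ▸ hK.2 _ (hookPath_isPath hi hin)

theorem entry_le_of_memKR (hi : 1 ≤ i) (hK : MemKR n i m a) {q : ℕ} (hiq : i ≤ q)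
    (hqn : q ≤ n) : a i q ≤ m := by
  have hentry : a i q ≤ ∑ j ∈ Icc i n, a i j :=
    single_le_sum (f := fun j => a i j) (fun _ _ => Nat.zero_le _) (mem_Icc.2 ⟨hiq, hqn⟩)
  have := hook_sum_le hi (hiq.trans hqn) hK
  omega

theorem phi_nonneg (hK : MemKR n i m a) (hi : 1 ≤ i) (hin : i ≤ n) (hl : 1 ≤ l) :
    0 ≤ phi n i m a l := by
  rcases lt_trichotomy l i with hli | rfl | hil
  · exact phi_nonneg_of_gt hl hli hin
  · have := hook_sum_le hi hin hK
    rw [phi, if_neg (by omega), if_pos rfl]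
    zify at this
    linarith
  · exact phi_nonneg_of_lt hi hil

theorem eps_zero_matrix (hl : l ≠ 0) : eps n i m (fun _ _ => 0) l = 0 := by
  simp [eps, hl]

theorem phi_zero_matrix (hl : l ≠ 0) :
    phi n i m (fun _ _ => 0) l = if l = i then (m : ℤ) else 0 := by
  simp only [phi, hl, if_false, Nat.cast_zero, sum_const_zero, sub_zero]
  split_ifs <;> rfl

theorem eOp_eq_none_iff : eOp n i m a l = none ↔ eps n i m a l ≤ 0 := by
  unfold eOp
  split_ifs with h <;> simp [h]

end Polytope

theorem eTen_eq_none_iff {n r₁ s₁ r₂ s₂ l : ℕ} {A B : Mat} (hB : 0 ≤ phi n r₂ s₂ B l) :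
    eTen n r₁ s₁ r₂ s₂ l (A, B) = none ↔
      eps n r₂ s₂ B l ≤ 0 ∧ eps n r₁ s₁ A l ≤ phi n r₂ s₂ B l := by
  unfold eTen
  split_ifs with h
  · simp only [Option.map_eq_none_iff, eOp_eq_none_iff]
    constructor
    · intro h'; linarith
    · rintro ⟨-, h'⟩; linarith
  · simp only [Option.map_eq_none_iff, eOp_eq_none_iff]
    exact ⟨fun h' => ⟨h', not_lt.1 h⟩, And.left⟩

def SupportedOnBox (n i : ℕ) (a : Mat) : Prop :=
  ∀ p q, ¬(1 ≤ p ∧ p ≤ i ∧ i ≤ q ∧ q ≤ n) → a p q = 0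

def SupportedOnAntidiagonal (i c : ℕ) (a : Mat) : Prop :=
  ∀ p q, p + q ≠ i + c → a p q = 0

def AntidiagonalMonotone (n i c : ℕ) (a : Mat) : Prop :=
  ∀ j, j + 1 ≤ min (i - 1) (n - c) → a (i - (j + 1)) (c + (j + 1)) ≤ a (i - j) (c + j)

section Antidiagonal

variable {n i m c : ℕ} {a : Mat}

theorem eq_zero_of_eps_nonpos_of_add_ne (hi : 1 ≤ i) (hic : i ≤ c) (hin : i ≤ n)
    (hsupp : SupportedOnBox n i a)
    (hE : ∀ l, 1 ≤ l → l ≤ n → l ≠ c → eps n i m a l ≤ 0) (p q : ℕ) (hpq : p + q ≠ i + c) :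
    a p q = 0 := by
  by_cases hpq' : 1 ≤ p ∧ p ≤ i ∧ i ≤ q ∧ q ≤ n
  swap
  · exact hsupp p q hpq'
  obtain ⟨hp1, hpi, hiq, hqn⟩ := hpq'
  have below : ∀ p' q', p < p' → p' + q' ≠ i + c → a p' q' = 0 := fun p' q' hp' hne =>
    if h : p' ≤ i then eq_zero_of_eps_nonpos_of_add_ne hi hic hin hsupp hE p' q' hne
    else hsupp p' q' (by omega)
  rcases hpq.lt_or_gt with hlt | hgt
  · rcases hpi.eq_or_lt with rfl | hpi
    · rcases hiq.eq_or_lt with rfl | hiq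
      · have := hE p hp1 hqn (by omega)
        rw [eps_self hp1] at this
        omega
      · simpa using le_sum_of_eps_nonpos_of_lt hi hiq (hE q (by omega) hqn (by omega))
          (mem_Icc.2 ⟨hp1, le_rfl⟩)
    · have := le_sum_of_eps_nonpos_of_gt hp1 hpi hin (hE p hp1 (by omega) (by omega))
        (mem_Icc.2 ⟨hiq, hqn⟩)
      rwa [sum_eq_zero fun j hj => below (p + 1) j (by omega) (by simp at hj; omega),
        Nat.le_zero] at this
  · have := le_sum_of_eps_nonpos_of_lt hi (by omega) (hE q (by omega) hqn (by omega))
      (mem_Icc.2 ⟨hp1, hpi⟩)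
    rwa [sum_eq_zero fun j hj => below j (q - 1) (by simp at hj; omega) (by simp at hj; omega),
      Nat.le_zero] at this
termination_by i - p

theorem eq_zero_of_forall_eps_nonpos (hi : 1 ≤ i) (hin : i ≤ n)
    (hsupp : SupportedOnBox n i a)
    (hE : ∀ l, 1 ≤ l → l ≤ n → eps n i m a l ≤ 0) : a = fun _ _ => 0 := by
  -- the antidiagonal through `(i, n + 1)` misses the box and exempts no colour in `1..n`
  funext p q
  by_cases hpq : p + q = i + (n + 1)
  · exact hsupp p q (by omega)
  · exact eq_zero_of_eps_nonpos_of_add_ne hi (by omega) hin hsupp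
      (fun l hl hln _ => hE l hl hln) p q hpq

theorem antidiagonalMonotone_of_eps_nonpos (hic : i ≤ c) (hzero : SupportedOnAntidiagonal i c a)
    (hE : ∀ l, 1 ≤ l → l < i → eps n i m a l ≤ 0) : AntidiagonalMonotone n i c a := by
  intro j hj
  have h := le_sum_of_eps_nonpos_of_gt (l := i - (j + 1)) (by omega) (by omega) (by omega)
    (hE _ (by omega) (by omega)) (q := c + (j + 1)) (mem_Icc.2 ⟨by omega, by omega⟩)
  rwa [sum_eq_single_of_mem (c + j) (mem_Icc.2 ⟨by omega, by omega⟩)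
    fun k _ hk => hzero _ _ (by omega), show i - (j + 1) + 1 = i - j by omega] at h

theorem le_of_antidiagonalMonotone (hsupp : SupportedOnBox n i a)
    (hzero : SupportedOnAntidiagonal i c a)
    (hmono : AntidiagonalMonotone n i c a)
    {p q : ℕ} (hp : 1 ≤ p) (hpi : p < i) : a p (q + 1) ≤ a (p + 1) q := by
  by_cases hd : p + (q + 1) = i + c
  · by_cases hqn : q + 1 ≤ n
    · have h := hmono (i - p - 1) (by omega)
      rwa [show i - (i - p - 1 + 1) = p by omega, show c + (i - p - 1 + 1) = q + 1 by omega,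
        show i - (i - p - 1) = p + 1 by omega, show c + (i - p - 1) = q by omega] at h
    · simp [hsupp p (q + 1) (by omega)]
  · simp [hzero p (q + 1) hd]

theorem eps_eq_ite_of_antidiagonal (hi : 1 ≤ i) (hic : i ≤ c) (hin : i ≤ n)
    (hsupp : SupportedOnBox n i a)
    (hzero : SupportedOnAntidiagonal i c a)
    (hmono : AntidiagonalMonotone n i c a)
    {l : ℕ} (hl : 1 ≤ l) : eps n i m a l = if l = c then (a i c : ℤ) else 0 := by
  rcases lt_trichotomy l i with hli | rfl | hil
  · rw [eps_eq_of_gt hl hli hin fun j _ _ =>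
      le_of_antidiagonalMonotone hsupp hzero hmono hl hli, hzero l i (by omega), if_neg (by omega)]
    rfl
  · rw [eps_self hi]
    split_ifs with h
    · rw [← h]
    · simp [hzero l l (by omega)]
  · rw [eps_eq_of_lt hi hil fun j hj hji => by
      simpa [Nat.sub_add_cancel (show 1 ≤ l by omega)] using
        le_of_antidiagonalMonotone (q := l - 1) hsupp hzero hmono hj hji]
    split_ifs with h
    · rw [h]
    · simp [hzero i l (by omega)]

end Antidiagonal

/-- classification of classical highest weight elements of
`B^{r₁,s₁} ⊗ B^{r₂,s₂}` for `r₁ ≤ r₂`: `B = 0`, `A` is supported on the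
antidiagonal `{(r₁-j, r₂+j) : 0 ≤ j ≤ k}`, with entries weakly increasing
towards `(r₁,r₂)` and `a_{r₁,r₂} ≤ min(s₁,s₂)`, and conversely. -/
theorem stmt8 (n r₁ s₁ r₂ s₂ : ℕ) (h1 : 1 ≤ r₁) (h12 : r₁ ≤ r₂) (h2n : r₂ ≤ n)
    (A B : Mat) (hA : MemKR n r₁ s₁ A) (hB : MemKR n r₂ s₂ B) :
    IsHW n r₁ s₁ r₂ s₂ (A, B) ↔
      (B = fun _ _ => 0) ∧
      (∀ p q, p + q ≠ r₁ + r₂ → A p q = 0) ∧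
      (∀ j, j + 1 ≤ min (r₁ - 1) (n - r₂) →
        A (r₁ - (j + 1)) (r₂ + (j + 1)) ≤ A (r₁ - j) (r₂ + j)) ∧
      A r₁ r₂ ≤ min s₁ s₂ := by
  have hr₂ : 1 ≤ r₂ := h1.trans h12
  have hHW : IsHW n r₁ s₁ r₂ s₂ (A, B) ↔ ∀ l, 1 ≤ l → l ≤ n →
      eps n r₂ s₂ B l ≤ 0 ∧ eps n r₁ s₁ A l ≤ phi n r₂ s₂ B l :=
    forall₃_congr fun l hl _ => eTen_eq_none_iff (phi_nonneg hB hr₂ h2n hl)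
  rw [hHW]
  constructor
  · intro h
    obtain rfl : B = fun _ _ => 0 :=
      eq_zero_of_forall_eps_nonpos hr₂ h2n hB.1 fun l hl hln => (h l hl hln).1
    have hE : ∀ l, 1 ≤ l → l ≤ n → eps n r₁ s₁ A l ≤ if l = r₂ then (s₂ : ℤ) else 0 :=
      fun l hl hln => by simpa only [phi_zero_matrix (show l ≠ 0 by omega)] using (h l hl hln).2
    have hzero : SupportedOnAntidiagonal r₁ r₂ A :=
      eq_zero_of_eps_nonpos_of_add_ne h1 h12 (h12.trans h2n) hA.1 fun l hl hln hne => by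
        simpa [hne] using hE l hl hln
    have hmono := antidiagonalMonotone_of_eps_nonpos h12 hzero fun l hl hli => by
      simpa [show l ≠ r₂ by omega] using hE l hl (by omega)
    have hs₂ : (A r₁ r₂ : ℤ) ≤ s₂ := (le_eps_of_le h1 h12).trans (by simpa using hE r₂ hr₂ h2n)
    exact ⟨rfl, hzero, hmono, le_min (entry_le_of_memKR h1 hA h12 h2n) (by exact_mod_cast hs₂)⟩
  · rintro ⟨rfl, hzero, hmono, hbound⟩ l hl hln
    refine ⟨(eps_zero_matrix (by omega)).le, ?_⟩
    rw [eps_eq_ite_of_antidiagonal h1 h12 (h12.trans h2n) hA.1 hzero hmono hl,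
      phi_zero_matrix (by omega)]
    split_ifs
    · exact_mod_cast hbound.trans (min_le_right _ _)
    · rfl
end

section
/- (Ground-state path weight recursion) Define, for a tuple Λ = (a₀, a₁, …, a_n) of non-negative integers summing to ℓ, the element b^Λ ∈ B^{i,ℓ} whose (p,q)-entry is a_{(p+q) mod (n+1)} (indices in Z/(n+1), identifying a_{n+1} with a₀, etc.; explicitly the top-left entry is a_{i+1} and entries increase by 1 in the cyclic index along rows and down columns). Then φ_l(b^Λ) = a_l for all l = 0,…,n and ε_l(b^Λ) = a_{(l + i) mod (n+1)} for all l; consequently the sequence Λ_{k+1} = (ε_0(b^{Λ_k}), …, ε_n(b^{Λ_k})) satisfies Λ_k = cyclic shift of Λ₀ by k·i positions, and Λ_{k} = Λ₀ whenever (n+1) | k·i. -/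
open Finset

/-! The entries of `b^Λ` are constant along anti-diagonals, so every sum of a row or column
segment of `b^Λ` is a sum of consecutive terms of the `(n+1)`-periodic sequence
`j ↦ a_{j mod (n+1)}`. In particular the functions `G` and `F` whose extreme maximizers define
`p_±^l, q_±^l` are constant (each of their values is the sum over one fixed window), so those
maximizers are the endpoints of the range and `φ_l, ε_l` collapse to single entries. For `φ_i`
and `ε_0` the two subtracted sums fill a full period except for the term `a_i`, which is what
remains of `ℓ = Σ a_j`. Since `ε(b^Λ)` is the shift of `Λ` by `i`, induction on `k` gives the
ground-state sequence. -/

section Periodic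

variable {M : Type*} [AddCommMonoid M] (f : ℕ → M)

lemma sum_Ico_mod_period (N x : ℕ) :
    ∑ j ∈ Ico x (x + N), f (j % N) = ∑ j ∈ range N, f j := by
  rw [← Nat.image_Ico_mod x N, sum_image (Nat.mod_injOn_Ico x N)]

lemma sum_range_add_mod (N t : ℕ) :
    ∑ j ∈ range N, f ((j + t) % N) = ∑ j ∈ range N, f j := by
  rw [range_eq_Ico, sum_Ico_add' (fun j => f (j % N)), zero_add, add_comm N t,
    sum_Ico_mod_period, range_eq_Ico]

lemma sum_Icc_add (a b s : ℕ) :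
    ∑ j ∈ Icc a b, f (j + s) = ∑ j ∈ Ico (a + s) (b + s + 1), f j := by
  rw [← Ico_add_one_right_eq_Icc, sum_Ico_add', add_right_comm]

end Periodic

section Argmax

variable {F : ℕ → ℕ} {a b C : ℕ}

lemma maximizers_eq_self_of_forall_eq {S : Finset ℕ} (hF : ∀ q ∈ S, F q = C) :
    maximizers S F = S :=
  filter_true_of_mem fun q hq q' hq' => (hF q' hq').trans (hF q hq).symm |>.le

lemma argmaxLow_Icc_of_forall_eq (hab : a ≤ b) (hF : ∀ q ∈ Icc a b, F q = C) :
    argmaxLow (Icc a b) F = a := by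
  rw [argmaxLow, maximizers_eq_self_of_forall_eq hF,
    le_antisymm (Finset.min_le (left_mem_Icc.2 hab))
      (Finset.le_min fun y hy => WithTop.coe_le_coe.2 (mem_Icc.1 hy).1)]
  rfl

lemma argmaxHigh_Icc_of_forall_eq (hab : a ≤ b) (hF : ∀ q ∈ Icc a b, F q = C) :
    argmaxHigh (Icc a b) F = b := by
  rw [argmaxHigh, maximizers_eq_self_of_forall_eq hF,
    le_antisymm (Finset.max_le fun y hy => WithBot.coe_le_coe.2 (mem_Icc.1 hy).2)
      (Finset.le_max (right_mem_Icc.2 hab))]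
  rfl

end Argmax

section GroundState

variable {n i ℓ : ℕ} (c : ℕ → ℕ)

lemma bOf_apply {p q : ℕ} (hp1 : 1 ≤ p) (hpi : p ≤ i) (hiq : i ≤ q) (hqn : q ≤ n) :
    bOf n i c p q = c ((p + q) % (n + 1)) :=
  if_pos ⟨hp1, hpi, hiq, hqn⟩

lemma bOf_congr {c' : ℕ → ℕ} (h : ∀ j ≤ n, c j = c' j) : bOf n i c = bOf n i c' := by
  funext p q
  unfold bOf
  split_ifs
  · exact h _ (Nat.lt_succ_iff.1 (Nat.mod_lt _ n.succ_pos))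
  · rfl

lemma sum_bOf_row {p a b : ℕ} (hp1 : 1 ≤ p) (hpi : p ≤ i) (hia : i ≤ a) (hbn : b ≤ n) :
    ∑ j ∈ Icc a b, bOf n i c p j = ∑ j ∈ Ico (a + p) (b + p + 1), c (j % (n + 1)) := by
  rw [← sum_Icc_add (fun j => c (j % (n + 1)))]
  refine sum_congr rfl fun j hj => ?_
  rw [bOf_apply c hp1 hpi (hia.trans (mem_Icc.1 hj).1) ((mem_Icc.1 hj).2.trans hbn), add_comm]

lemma sum_bOf_col {q a b : ℕ} (hiq : i ≤ q) (hqn : q ≤ n) (ha1 : 1 ≤ a) (hbi : b ≤ i) :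
    ∑ j ∈ Icc a b, bOf n i c j q = ∑ j ∈ Ico (a + q) (b + q + 1), c (j % (n + 1)) := by
  rw [← sum_Icc_add (fun j => c (j % (n + 1)))]
  exact sum_congr rfl fun j hj =>
    bOf_apply c (ha1.trans (mem_Icc.1 hj).1) ((mem_Icc.1 hj).2.trans hbi) hiq hqn

lemma Gplus_bOf {l q : ℕ} (hil : i < l) (hln : l ≤ n) (hq : q ∈ Icc 1 i) :
    Gplus i (bOf n i c) l q = ∑ j ∈ Ico l (i + l + 1), c (j % (n + 1)) := by
  obtain ⟨hq1, hqi⟩ := mem_Icc.1 hq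
  rw [Gplus, sum_bOf_col c (by omega) (by omega) le_rfl hqi, sum_bOf_col c hil.le hln hq1 le_rfl,
    show 1 + (l - 1) = l by omega, show q + (l - 1) + 1 = q + l by omega,
    sum_Ico_consecutive _ (by omega) (by omega)]

lemma Fminus_bOf {l q : ℕ} (hl1 : 1 ≤ l) (hli : l < i) (hq : q ∈ Icc i n) :
    Fminus n i (bOf n i c) l q = ∑ j ∈ Ico (i + l) (n + l + 2), c (j % (n + 1)) := by
  obtain ⟨hiq, hqn⟩ := mem_Icc.1 hq
  rw [Fminus, sum_bOf_row c hl1 hli.le le_rfl hqn, sum_bOf_row c (by omega) hli hiq le_rfl,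
    show q + (l + 1) = q + l + 1 by omega, show n + (l + 1) + 1 = n + l + 2 by omega,
    sum_Ico_consecutive _ (by omega) (by omega)]

lemma pPlus_bOf {l : ℕ} (hi1 : 1 ≤ i) (hil : i < l) (hln : l ≤ n) :
    pPlus i (bOf n i c) l = 1 :=
  argmaxLow_Icc_of_forall_eq hi1 fun _ hq => Gplus_bOf c hil hln hq

lemma qPlus_bOf {l : ℕ} (hi1 : 1 ≤ i) (hil : i < l) (hln : l ≤ n) :
    qPlus i (bOf n i c) l = i :=
  argmaxHigh_Icc_of_forall_eq hi1 fun _ hq => Gplus_bOf c hil hln hq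

lemma pMinus_bOf {l : ℕ} (hl1 : 1 ≤ l) (hli : l < i) (hin : i ≤ n) :
    pMinus n i (bOf n i c) l = n :=
  argmaxHigh_Icc_of_forall_eq hin fun _ hq => Fminus_bOf c hl1 hli hq

lemma qMinus_bOf {l : ℕ} (hl1 : 1 ≤ l) (hli : l < i) (hin : i ≤ n) :
    qMinus n i (bOf n i c) l = i :=
  argmaxLow_Icc_of_forall_eq hin fun _ hq => Fminus_bOf c hl1 hli hq

lemma sum_Ico_mod_consecutive_add_eq_sum_range (hin : i ≤ n) {m : ℕ} (him : i + 1 ≤ m)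
    (hm : m ≤ n + i + 1) :
    ∑ j ∈ Ico (i + 1) m, c (j % (n + 1)) + ∑ j ∈ Ico m (n + i + 1), c (j % (n + 1)) + c i =
      ∑ j ∈ range (n + 1), c j := by
  have hci : c i = c ((n + i + 1) % (n + 1)) := by
    rw [show n + i + 1 = i + (n + 1) by omega, Nat.add_mod_right, Nat.mod_eq_of_lt (by omega)]
  rw [sum_Ico_consecutive _ him hm, hci, ← sum_Ico_succ_top (by omega),
    show n + i + 1 + 1 = i + 1 + (n + 1) by omega, sum_Ico_mod_period]

variable (hi1 : 1 ≤ i) (hin : i ≤ n) (hsum : ∑ j ∈ range (n + 1), c j = ℓ)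
include hi1 hin hsum

lemma phi_bOf_self : phi n i ℓ (bOf n i c) i = c i := by
  have h := sum_Ico_mod_consecutive_add_eq_sum_range c hin (m := i + i) (by omega) (by omega)
  rw [phi, if_neg (by omega), if_pos rfl, ← Nat.cast_sum, ← Nat.cast_sum,
    sum_bOf_col c le_rfl hin le_rfl (by omega), sum_bOf_row c hi1 le_rfl le_rfl le_rfl,
    show i - 1 + i + 1 = i + i by omega, add_comm 1 i]
  omega

lemma eps_bOf_zero : eps n i ℓ (bOf n i c) 0 = c i := by
  have h := sum_Ico_mod_consecutive_add_eq_sum_range c hin (m := n + 2) (by omega) (by omega)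
  have hcol : ∑ j ∈ Icc 2 n, bOf n i c j n = ∑ j ∈ Icc 2 i, bOf n i c j n :=
    (sum_subset (Icc_subset_Icc_right hin) fun j hj hji =>
      if_neg fun hb => hji (mem_Icc.2 ⟨(mem_Icc.1 hj).1, hb.2.1⟩)).symm
  rw [eps, if_pos rfl, ← Nat.cast_sum, ← Nat.cast_sum, hcol,
    sum_bOf_row c le_rfl hi1 le_rfl le_rfl, sum_bOf_col c hin le_rfl (by omega) le_rfl,
    show n + 1 + 1 = n + 2 by omega, show 2 + n = n + 2 by omega,
    show i + n + 1 = n + i + 1 by omega]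
  omega

lemma phi_bOf {l : ℕ} (hln : l ≤ n) : phi n i ℓ (bOf n i c) l = c l := by
  rcases Nat.eq_zero_or_pos l with rfl | hl1
  · rw [phi, if_pos rfl, bOf_apply c le_rfl hi1 hin le_rfl, add_comm, Nat.mod_self]
  rcases lt_trichotomy l i with hli | rfl | hil
  · rw [phi, if_neg hl1.ne', if_neg hli.ne, if_neg (by omega), pMinus_bOf c hl1 hli hin,
      Icc_self, sum_singleton, Icc_eq_empty (by omega), sum_empty,
      bOf_apply c (by omega) (by omega) hin le_rfl, show l + 1 + n = l + (n + 1) by omega,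
      Nat.add_mod_right, Nat.mod_eq_of_lt (by omega), sub_zero]
  · exact phi_bOf_self c hi1 hin hsum
  · rw [phi, if_neg hl1.ne', if_neg hil.ne', if_pos hil, pPlus_bOf c hi1 hil hln,
      Icc_self, sum_singleton, Icc_eq_empty (by omega), sum_empty,
      bOf_apply c le_rfl hi1 (by omega) (by omega), show 1 + (l - 1) = l by omega,
      Nat.mod_eq_of_lt (by omega), sub_zero]

lemma eps_bOf {l : ℕ} (hln : l ≤ n) : eps n i ℓ (bOf n i c) l = c ((l + i) % (n + 1)) := by
  rcases Nat.eq_zero_or_pos l with rfl | hl1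
  · rw [eps_bOf_zero c hi1 hin hsum, zero_add, Nat.mod_eq_of_lt (by omega)]
  rcases lt_trichotomy l i with hli | rfl | hil
  · rw [eps, if_neg hl1.ne', if_neg hli.ne, if_neg (by omega), qMinus_bOf c hl1 hli hin,
      Icc_self, sum_singleton, Icc_eq_empty (by omega), sum_empty,
      bOf_apply c hl1 hli.le le_rfl hin, sub_zero]
  · rw [eps, if_neg hl1.ne', if_pos rfl, bOf_apply c hl1 le_rfl le_rfl hin]
  · rw [eps, if_neg hl1.ne', if_neg hil.ne', if_pos hil, qPlus_bOf c hi1 hil hln,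
      Icc_self, sum_singleton, Icc_eq_empty (by omega), sum_empty,
      bOf_apply c hi1 le_rfl hil.le hln, add_comm i l, sub_zero]

lemma groundState_eq_shift (Lam : ℕ → ℕ → ℕ) (h0 : ∀ j, Lam 0 j = c j)
    (hstep : ∀ k j, Lam (k + 1) j = (eps n i ℓ (bOf n i (Lam k)) j).toNat) (k : ℕ) {j : ℕ}
    (hjn : j ≤ n) : Lam k j = c ((j + k * i) % (n + 1)) := by
  induction k generalizing j with
  | zero => rw [h0, zero_mul, add_zero, Nat.mod_eq_of_lt (by omega)]
  | succ k ih =>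
    have hsum_shift : ∑ j ∈ range (n + 1), c ((j + k * i) % (n + 1)) = ℓ :=
      (sum_range_add_mod c _ _).trans hsum
    rw [hstep, bOf_congr (Lam k) fun _ => ih, eps_bOf _ hi1 hin hsum_shift hjn,
      Int.toNat_natCast, Nat.mod_add_mod, show j + i + k * i = j + (k + 1) * i by ring]

end GroundState

/-- for `b^Λ` with `(p,q)`-entry `a_{(p+q) mod (n+1)}` one has
`φ_l(b^Λ) = a_l` and `ε_l(b^Λ) = a_{(l+i) mod (n+1)}`; consequently the
ground-state sequence `Λ_{k+1} = (ε_0(b^{Λ_k}),…,ε_n(b^{Λ_k}))` is the cyclic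
shift of `Λ₀` by `k·i`, and `Λ_k = Λ₀` whenever `(n+1) ∣ k·i`. -/
theorem stmt18 (n i ℓ : ℕ) (hi1 : 1 ≤ i) (hin : i ≤ n) (c : ℕ → ℕ)
    (hsum : ∑ j ∈ range (n + 1), c j = ℓ) :
    (∀ l, l ≤ n → phi n i ℓ (bOf n i c) l = c l ∧
      eps n i ℓ (bOf n i c) l = c ((l + i) % (n + 1))) ∧
    ∀ Lam : ℕ → ℕ → ℕ, (∀ j, Lam 0 j = c j) →
      (∀ k j, Lam (k + 1) j = (eps n i ℓ (bOf n i (Lam k)) j).toNat) →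
      (∀ k j, j ≤ n → Lam k j = c ((j + k * i) % (n + 1))) ∧
      ∀ k, (n + 1) ∣ k * i → ∀ j, j ≤ n → Lam k j = c j := by
  refine ⟨fun l hl => ⟨phi_bOf c hi1 hin hsum hl, eps_bOf c hi1 hin hsum hl⟩,
    fun Lam h0 hstep => ⟨fun k j => groundState_eq_shift c hi1 hin hsum Lam h0 hstep k, ?_⟩⟩
  rintro k ⟨t, ht⟩ j hjn
  rw [groundState_eq_shift c hi1 hin hsum Lam h0 hstep k hjn, ht, Nat.add_mul_mod_self_left,
    Nat.mod_eq_of_lt (by omega)]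
end
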